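/- arXiv:2009.13738 — 2 statements merged into one kernel-verified Lean document; each statement's English description precedes it below -/
import Mathlib

section
/- Let S_2 be a binomial random variable Bin(N, 1/k) with mean c = N/k, and let S_1 = S_2' + 1 where S_2' is an independent copy of Bin(N, 1/k). If c ≥ 14·ln(2/δ)/ε² for ε ∈ (0,1] and δ ∈ (0, 0.2907], then P[S_1 ≥ c·e^{ε/2}] + P[S_2 ≤ c·e^{-ε/2}] ≤ δ. -/
/-!
Both tails are bounded by the exponential Markov inequality together with the binomial moment
generating function bound `E[e^{sX}] = (1 + p(e^s - 1))^N ≤ e^{Np(e^s - 1)}`, taking `s = ±ε/2`.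
With `x = ε/2` this gives `P[S₁ ≥ c e^x] ≤ e^{x - c(x e^x - e^x + 1)} ≤ e^{x - c x²/2}` and
`P[S₂ ≤ c e^{-x}] ≤ e^{-c(1 - (1 + x) e^{-x})} ≤ e^{-2c x²/7}`. Since `c ε² ≥ 14 ln(2/δ)` and
`ln(2/δ) ≥ 1`, each of these is at most `δ/2`.
-/

open Real Finset

lemma exp_le_quartic_of_abs_le_one {x : ℝ} (hx : |x| ≤ 1) :
    exp x ≤ 1 + x + x ^ 2 / 2 + x ^ 3 / 6 + x ^ 4 * (5 / 96) := by
  have h := (abs_le.mp (exp_bound hx (n := 4) (by norm_num))).2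
  norm_num [sum_range_succ, Nat.factorial, Even.pow_abs] at h
  linarith

lemma sq_div_two_le_mul_exp_sub_exp_add_one {x : ℝ} (h0 : 0 ≤ x) (h1 : x ≤ 1 / 2) :
    x ^ 2 / 2 ≤ x * exp x - exp x + 1 := by
  have hE := exp_le_quartic_of_abs_le_one (x := x) (by rw [abs_of_nonneg h0]; linarith)
  have hmul := mul_le_mul_of_nonpos_right hE (by linarith : x - 1 ≤ 0)
  nlinarith [pow_nonneg h0 3, pow_nonneg h0 4, pow_nonneg h0 5]

lemma two_mul_sq_div_seven_le_one_sub_mul_exp_neg {x : ℝ} (h0 : 0 ≤ x) (h1 : x ≤ 1 / 2) :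
    2 * x ^ 2 / 7 ≤ 1 - (1 + x) * exp (-x) := by
  have hE := exp_le_quartic_of_abs_le_one (x := -x) (by rw [abs_neg, abs_of_nonneg h0]; linarith)
  have hmul := mul_le_mul_of_nonneg_left hE (by linarith : (0 : ℝ) ≤ 1 + x)
  have hx3 : x ^ 3 ≤ x ^ 2 * (1 / 2) := by nlinarith [sq_nonneg x]
  have hx5 : x ^ 5 ≤ x ^ 2 * (1 / 8) := by
    nlinarith [pow_nonneg h0 2, pow_nonneg h0 3, mul_nonneg (pow_nonneg h0 3) h0]
  nlinarith [pow_nonneg h0 4]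

lemma sum_ite_le_sum_mul_exp {ι : Type*} (s : Finset ι) (P : ι → Prop) [DecidablePred P]
    (w g : ι → ℝ) (hw : ∀ i ∈ s, 0 ≤ w i) (hg : ∀ i ∈ s, P i → 0 ≤ g i) :
    ∑ i ∈ s, (if P i then w i else 0) ≤ ∑ i ∈ s, w i * exp (g i) := by
  refine sum_le_sum fun i hi => ?_
  split_ifs with hP
  · exact le_mul_of_one_le_right (hw i hi) (one_le_exp (hg i hi hP))
  · exact mul_nonneg (hw i hi) (exp_nonneg _)

section Binomial

variable (N : ℕ) {p : ℝ} (hp0 : 0 ≤ p) (hp1 : p ≤ 1)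
include hp0 hp1

lemma binomial_mgf_le (s : ℝ) :
    ∑ i ∈ range (N + 1), (N.choose i : ℝ) * p ^ i * (1 - p) ^ (N - i) * exp (s * i)
      ≤ exp (N * p * (exp s - 1)) := by
  have hmgf : ∑ i ∈ range (N + 1), (N.choose i : ℝ) * p ^ i * (1 - p) ^ (N - i) * exp (s * i)
      = (p * exp s + (1 - p)) ^ N := by
    rw [add_pow]
    refine sum_congr rfl fun i _ => ?_
    rw [mul_pow, ← exp_nat_mul]
    ring_nf
  have hbase : p * exp s + (1 - p) ≤ exp (p * (exp s - 1)) := by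
    linarith [add_one_le_exp (p * (exp s - 1))]
  calc _ = (p * exp s + (1 - p)) ^ N := hmgf
    _ ≤ exp (p * (exp s - 1)) ^ N :=
        pow_le_pow_left₀ (by nlinarith [exp_nonneg s]) hbase N
    _ = exp (N * p * (exp s - 1)) := by rw [← exp_nat_mul]; ring_nf

lemma binomial_succ_tail_le {t : ℝ} (ht : 0 ≤ t) (a : ℝ) :
    ∑ i ∈ range (N + 1),
        (if (i : ℝ) + 1 ≥ a then (N.choose i : ℝ) * p ^ i * (1 - p) ^ (N - i) else 0)
      ≤ exp (t * (1 - a) + N * p * (exp t - 1)) := by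
  have hq : 0 ≤ 1 - p := by linarith
  calc _ ≤ ∑ i ∈ range (N + 1),
          (N.choose i : ℝ) * p ^ i * (1 - p) ^ (N - i) * exp (t * (1 - a) + t * i) :=
        sum_ite_le_sum_mul_exp _ _ _ _ (fun _ _ => by positivity)
          (fun i _ (h : (i : ℝ) + 1 ≥ a) => by nlinarith)
    _ = exp (t * (1 - a)) * ∑ i ∈ range (N + 1),
          (N.choose i : ℝ) * p ^ i * (1 - p) ^ (N - i) * exp (t * i) := by
        rw [mul_sum]
        exact sum_congr rfl fun i _ => by rw [exp_add]; ring
    _ ≤ exp (t * (1 - a)) * exp (N * p * (exp t - 1)) := by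
        gcongr; exact binomial_mgf_le N hp0 hp1 t
    _ = _ := (exp_add _ _).symm

lemma binomial_lower_tail_le {t : ℝ} (ht : 0 ≤ t) (b : ℝ) :
    ∑ i ∈ range (N + 1),
        (if (i : ℝ) ≤ b then (N.choose i : ℝ) * p ^ i * (1 - p) ^ (N - i) else 0)
      ≤ exp (t * b + N * p * (exp (-t) - 1)) := by
  have hq : 0 ≤ 1 - p := by linarith
  calc _ ≤ ∑ i ∈ range (N + 1),
          (N.choose i : ℝ) * p ^ i * (1 - p) ^ (N - i) * exp (t * b + -t * i) :=
        sum_ite_le_sum_mul_exp _ _ _ _ (fun _ _ => by positivity)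
          (fun i _ (h : (i : ℝ) ≤ b) => by nlinarith)
    _ = exp (t * b) * ∑ i ∈ range (N + 1),
          (N.choose i : ℝ) * p ^ i * (1 - p) ^ (N - i) * exp (-t * i) := by
        rw [mul_sum]
        exact sum_congr rfl fun i _ => by rw [exp_add]; ring
    _ ≤ exp (t * b) * exp (N * p * (exp (-t) - 1)) := by
        gcongr; exact binomial_mgf_le N hp0 hp1 (-t)
    _ = _ := (exp_add _ _).symm

variable {x : ℝ} (hx0 : 0 ≤ x) (hx1 : x ≤ 1 / 2)
include hx0 hx1

lemma binomial_succ_tail_mul_exp_le :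
    ∑ i ∈ range (N + 1), (if (i : ℝ) + 1 ≥ N * p * exp x then
        (N.choose i : ℝ) * p ^ i * (1 - p) ^ (N - i) else 0)
      ≤ exp (x - N * p * x ^ 2 / 2) := by
  refine (binomial_succ_tail_le N hp0 hp1 hx0 _).trans (exp_le_exp.mpr ?_)
  have hc : 0 ≤ (N : ℝ) * p := by positivity
  nlinarith [mul_le_mul_of_nonneg_left (sq_div_two_le_mul_exp_sub_exp_add_one hx0 hx1) hc]

lemma binomial_lower_tail_mul_exp_neg_le :
    ∑ i ∈ range (N + 1), (if (i : ℝ) ≤ N * p * exp (-x) then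
        (N.choose i : ℝ) * p ^ i * (1 - p) ^ (N - i) else 0)
      ≤ exp (-(2 * (N * p) * x ^ 2 / 7)) := by
  refine (binomial_lower_tail_le N hp0 hp1 hx0 _).trans (exp_le_exp.mpr ?_)
  have hc : 0 ≤ (N : ℝ) * p := by positivity
  nlinarith [mul_le_mul_of_nonneg_left (two_mul_sq_div_seven_le_one_sub_mul_exp_neg hx0 hx1) hc]

end Binomial

lemma one_le_log_two_div {δ : ℝ} (hδ0 : 0 < δ) (hδ1 : δ ≤ 0.2907) : 1 ≤ log (2 / δ) := by
  rw [le_log_iff_exp_le (by positivity), le_div_iff₀ hδ0]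
  nlinarith [exp_one_lt_d9]

theorem dummy_blanket_tail_general (N k : ℕ)
    (ε δ : ℝ) (hε0 : 0 < ε) (hε1 : ε ≤ 1) (hδ0 : 0 < δ) (hδ1 : δ ≤ 0.2907)
    (c : ℝ) (hc : c = (N : ℝ) / k)
    (hcbound : c ≥ 14 * Real.log (2 / δ) / ε ^ 2) :
    (∑ i ∈ Finset.range (N + 1),
        if ((i : ℝ) + 1) ≥ c * Real.exp (ε / 2) then
          (N.choose i : ℝ) * (1 / k) ^ i * (1 - 1 / k) ^ (N - i) else 0) +
      (∑ i ∈ Finset.range (N + 1),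
        if (i : ℝ) ≤ c * Real.exp (-ε / 2) then
          (N.choose i : ℝ) * (1 / k) ^ i * (1 - 1 / k) ^ (N - i) else 0)
      ≤ δ := by
  have hp0 : (0 : ℝ) ≤ 1 / k := by positivity
  have hp1 : (1 : ℝ) / k ≤ 1 := by simpa only [one_div] using Nat.cast_inv_le_one k
  have hx0 : 0 ≤ ε / 2 := by linarith
  have hx1 : ε / 2 ≤ 1 / 2 := by linarith
  have hNp : (N : ℝ) * (1 / k) = c := by rw [hc, mul_one_div]
  have hup := binomial_succ_tail_mul_exp_le N hp0 hp1 hx0 hx1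
  have hlo := binomial_lower_tail_mul_exp_neg_le N hp0 hp1 hx0 hx1
  rw [hNp] at hup hlo
  rw [neg_div]
  have hL := one_le_log_two_div hδ0 hδ1
  have hcε : 14 * log (2 / δ) ≤ c * ε ^ 2 := by
    rwa [ge_iff_le, div_le_iff₀ (by positivity)] at hcbound
  have hhalf : exp (-log (2 / δ)) = δ / 2 := by
    rw [exp_neg, exp_log (by positivity), inv_div]
  have hup' : exp (ε / 2 - c * (ε / 2) ^ 2 / 2) ≤ δ / 2 :=
    hhalf ▸ exp_le_exp.mpr (by nlinarith)
  have hlo' : exp (-(2 * c * (ε / 2) ^ 2 / 7)) ≤ δ / 2 :=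
    hhalf ▸ exp_le_exp.mpr (by nlinarith)
  linarith

/-- Chernoff tail bound for the dummy blanket: with `S₂ ~ Bin(N, 1/k)` and
`S₁ = Bin(N, 1/k) + 1`, if `c = N/k ≥ 14 ln(2/δ)/ε²` then
`P[S₁ ≥ c e^{ε/2}] + P[S₂ ≤ c e^{-ε/2}] ≤ δ`. -/
theorem dummy_blanket_tail (N k : ℕ) (hN : 0 < N) (hk : 0 < k)
    (ε δ : ℝ) (hε0 : 0 < ε) (hε1 : ε ≤ 1) (hδ0 : 0 < δ) (hδ1 : δ ≤ 0.2907)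
    (c : ℝ) (hc : c = (N : ℝ) / k)
    (hcbound : c ≥ 14 * Real.log (2 / δ) / ε ^ 2) :
    (∑ i ∈ Finset.range (N + 1),
        if ((i : ℝ) + 1) ≥ c * Real.exp (ε / 2) then
          (N.choose i : ℝ) * (1 / k) ^ i * (1 - 1 / k) ^ (N - i) else 0) +
      (∑ i ∈ Finset.range (N + 1),
        if (i : ℝ) ≤ c * Real.exp (-ε / 2) then
          (N.choose i : ℝ) * (1 / k) ^ i * (1 - 1 / k) ^ (N - i) else 0)
      ≤ δ :=
  dummy_blanket_tail_general N k ε δ hε0 hε1 hδ0 hδ1 c hc hcbound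
end

section
/- In the pureDUMP protocol, the mean squared error (1/k)·Σ_{v∈D} E[(f̃_v − f_v)²] equals s(k−1)/(n·k²). -/
/-!
Write `B_v(ω)` for the number of dummy points equal to `v`. The error of the estimate of `f_v` is
`(B_v - ns/k)/n`, and `B_v - ns/k = ∑_p c(ω p)` with `c a = 1{a = v} - 1/k`, a function of mean zero
under the uniform distribution. Since the dummies are independent, the cross terms of the square
average to zero, so the second moment is `ns` times that of `c`, namely `ns (k-1)/k²`.
-/

open Finset

section PiSums

variable {ι κ : Type*} [Fintype ι] [DecidableEq ι] [Fintype κ]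

theorem sum_apply_eq_card_pow_mul_sum (p : ι) (g : κ → ℝ) :
    ∑ ω : ι → κ, g (ω p) = (Fintype.card κ : ℝ) ^ (Fintype.card ι - 1) * ∑ a, g a := by
  rw [← (Equiv.funSplitAt p κ).symm.sum_comp, Fintype.sum_prod_type]
  simp [Fintype.card_subtype_compl, ← sum_mul, mul_comm]

theorem sum_apply_mul_apply_eq_zero_of_sum_eq_zero {p q : ι} (hpq : p ≠ q) (g h : κ → ℝ)
    (hh : ∑ b, h b = 0) : ∑ ω : ι → κ, g (ω p) * h (ω q) = 0 := by
  rw [← (Equiv.funSplitAt q κ).symm.sum_comp, Fintype.sum_prod_type_right]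
  simp [dif_neg hpq, ← mul_sum, hh]

theorem sum_sum_apply_sq_of_sum_eq_zero (f : κ → ℝ) (hf : ∑ a, f a = 0) :
    ∑ ω : ι → κ, (∑ p, f (ω p)) ^ 2 =
      Fintype.card ι * (Fintype.card κ : ℝ) ^ (Fintype.card ι - 1) * ∑ a, f a ^ 2 := by
  calc ∑ ω : ι → κ, (∑ p, f (ω p)) ^ 2
      = ∑ p, ∑ q, ∑ ω : ι → κ, f (ω p) * f (ω q) := by
        simp_rw [sq, sum_mul_sum]
        rw [sum_comm]
        exact sum_congr rfl fun p _ => sum_comm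
    _ = ∑ p : ι, ∑ ω : ι → κ, f (ω p) ^ 2 := by
        refine sum_congr rfl fun p _ => ?_
        rw [sum_eq_single p
          (fun q _ hqp => sum_apply_mul_apply_eq_zero_of_sum_eq_zero (Ne.symm hqp) f f hf)
          (by simp)]
        simp only [sq]
    _ = _ := by
        simp only [sum_apply_eq_card_pow_mul_sum (g := fun a => f a ^ 2), sum_const, card_univ,
          nsmul_eq_mul, mul_assoc]

theorem cast_card_ne_zero (v : κ) : (Fintype.card κ : ℝ) ≠ 0 :=
  Nat.cast_ne_zero.mpr (Fintype.card_pos_iff.mpr ⟨v⟩).ne'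

variable [DecidableEq κ]

theorem sum_centered_indicator (v : κ) :
    ∑ a : κ, ((if a = v then 1 else 0) - 1 / (Fintype.card κ : ℝ)) = 0 := by
  simp [sum_sub_distrib, cast_card_ne_zero v]

theorem sum_centered_indicator_sq (v : κ) :
    ∑ a : κ, ((if a = v then 1 else 0) - 1 / (Fintype.card κ : ℝ)) ^ 2 =
      ((Fintype.card κ : ℝ) - 1) / Fintype.card κ := by
  have := cast_card_ne_zero v
  simp [sub_sq, sum_add_distrib, sum_sub_distrib]
  field_simp
  ring

theorem sum_uniform_mul_count_sub_mean_sq (v : κ) :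
    ∑ ω : ι → κ, (1 / (Fintype.card κ : ℝ)) ^ Fintype.card ι *
        ((∑ p, if ω p = v then (1 : ℝ) else 0) - Fintype.card ι / Fintype.card κ) ^ 2 =
      Fintype.card ι * ((Fintype.card κ : ℝ) - 1) / Fintype.card κ ^ 2 := by
  have hK := cast_card_ne_zero v
  have centered (ω : ι → κ) :
      (∑ p, if ω p = v then (1 : ℝ) else 0) - Fintype.card ι / Fintype.card κ =
        ∑ p, ((if ω p = v then 1 else 0) - 1 / (Fintype.card κ : ℝ)) := by
    simp [sum_sub_distrib, div_eq_mul_one_div (Fintype.card ι : ℝ)]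
  simp_rw [centered, ← mul_sum]
  rw [sum_sum_apply_sq_of_sum_eq_zero _ (sum_centered_indicator v), sum_centered_indicator_sq]
  rcases Fintype.card ι with _ | m
  · simp
  · rw [Nat.add_sub_cancel, one_div_pow]
    field_simp
    ring

end PiSums

theorem pureDUMP_mse_general (n s k : ℕ) (hk : 0 < k)
    (x : Fin n → Fin k) :
    (1 / (k : ℝ)) *
        ∑ v : Fin k,
          ∑ ω : Fin n × Fin s → Fin k,
            ((1 : ℝ) / k) ^ (n * s) *
              (((1 / n) *
                  ((∑ i : Fin n, if x i = v then (1 : ℝ) else 0) +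
                    (∑ p : Fin n × Fin s, if ω p = v then (1 : ℝ) else 0) -
                    (n : ℝ) * s / k)) -
                (1 / n) * ∑ i : Fin n, if x i = v then (1 : ℝ) else 0) ^ 2
      = (s : ℝ) * (k - 1) / (n * k ^ 2) := by
  have hK : (k : ℝ) ≠ 0 := Nat.cast_ne_zero.mpr hk.ne'
  calc _ = 1 / (k : ℝ) * ∑ _v : Fin k, (s : ℝ) * (k - 1) / (n * k ^ 2) := by
        refine congrArg _ (sum_congr rfl fun v _ => ?_)
        have dummy_variance := sum_uniform_mul_count_sub_mean_sq (ι := Fin n × Fin s) v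
        simp only [Fintype.card_prod, Fintype.card_fin, Nat.cast_mul] at dummy_variance
        calc _ = (1 / n : ℝ) ^ 2 * ∑ ω : Fin n × Fin s → Fin k, ((1 : ℝ) / k) ^ (n * s) *
                ((∑ p : Fin n × Fin s, if ω p = v then (1 : ℝ) else 0) - n * s / k) ^ 2 := by
              rw [mul_sum _ _ ((1 / n : ℝ) ^ 2)]
              exact sum_congr rfl fun ω _ => by ring
          _ = _ := by
              rw [dummy_variance]
              field_simp
    _ = _ := by
        rw [sum_const, card_univ, Fintype.card_fin, nsmul_eq_mul, ← mul_assoc,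
          one_div_mul_cancel hK, one_mul]

/-- The mean squared error of pureDUMP, averaged over the domain, is `s(k−1)/(nk²)`. -/
theorem pureDUMP_mse (n s k : ℕ) (hn : 0 < n) (hk : 0 < k)
    (x : Fin n → Fin k) :
    (1 / (k : ℝ)) *
        ∑ v : Fin k,
          ∑ ω : Fin n × Fin s → Fin k,
            ((1 : ℝ) / k) ^ (n * s) *
              (((1 / n) *
                  ((∑ i : Fin n, if x i = v then (1 : ℝ) else 0) +
                    (∑ p : Fin n × Fin s, if ω p = v then (1 : ℝ) else 0) -
                    (n : ℝ) * s / k)) -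
                (1 / n) * ∑ i : Fin n, if x i = v then (1 : ℝ) else 0) ^ 2
      = (s : ℝ) * (k - 1) / (n * k ^ 2) :=
  pureDUMP_mse_general n s k hk x
end
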